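/- Fix D ≥ 1 and K = [0,1]^D. The jump of the Weierstraß representation is continuously equivalent to the naive Weierstraß representation of C(K): (i) there exists a continuous function F, defined on the set of all ([ρ→ρ]∘ι')-names of continuous functions f : K → ℝ, such that for every f ∈ C(K) and every ([ρ→ρ]∘ι')-name P of f, F(P) is a [ρ→ρ]'-name of f; and (ii) there exists a continuous function G mapping, in the same sense, every [ρ→ρ]'-name of any f ∈ C(K) to a ([ρ→ρ]∘ι')-name of f. -/
import Mathlib


open Filter Topology

/- Rational polynomials in `D` variables form a countable discrete space;
the name space `ℕ → MvPolynomial (Fin D) ℚ` carries the product topology. -/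
local instance (D : ℕ) : TopologicalSpace (MvPolynomial (Fin D) ℚ) := ⊥

/-- The unit cube `K = [0,1]^D`. -/
def unitCube (D : ℕ) : Set (EuclideanSpace ℝ (Fin D)) :=
  {x | ∀ i, x i ∈ Set.Icc (0 : ℝ) 1}

/-- Evaluation of a rational polynomial at a real point. -/
noncomputable def pevalR (D : ℕ) (P : MvPolynomial (Fin D) ℚ)
    (x : EuclideanSpace ℝ (Fin D)) : ℝ :=
  MvPolynomial.eval₂ (algebraMap ℚ ℝ) (fun i => x i) P

/-- A [ρ→ρ]-name of `f ∈ C(K)`: a sequence of rational polynomials with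
`‖f - P n‖ ≤ 2^{-n}` (sup-norm over `K`, expressed pointwise) for all `n`. -/
noncomputable def IsWeierstrassName (D : ℕ) (P : ℕ → MvPolynomial (Fin D) ℚ)
    (f : EuclideanSpace ℝ (Fin D) → ℝ) : Prop :=
  ∀ n : ℕ, ∀ x ∈ unitCube D, |f x - pevalR D (P n) x| ≤ (2 : ℝ) ^ (-(n : ℤ))

/-- A [ρ→ρ]'-name of `f ∈ C(K)`: a sequence of rational polynomials with
`‖f - P n‖ → 0`, i.e. converging to `f` uniformly on `K`. -/
noncomputable def IsWeierstrassPrimeName (D : ℕ) (P : ℕ → MvPolynomial (Fin D) ℚ)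
    (f : EuclideanSpace ℝ (Fin D) → ℝ) : Prop :=
  TendstoUniformlyOn (fun n x => pevalR D (P n) x) f Filter.atTop (unitCube D)

/-- A ([ρ→ρ]∘ι')-name of `f`: a double sequence of rational polynomials
(via `Nat.pair`) each of whose rows is eventually constant, the sequence of
row limits being a [ρ→ρ]-name of `f`. -/
noncomputable def IsWeierstrassJumpName (D : ℕ) (P : ℕ → MvPolynomial (Fin D) ℚ)
    (f : EuclideanSpace ℝ (Fin D) → ℝ) : Prop :=
  ∃ z : ℕ → MvPolynomial (Fin D) ℚ,
    (∀ n : ℕ, ∃ M : ℕ, ∀ m : ℕ, M ≤ m → P (Nat.pair n m) = z n) ∧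
    IsWeierstrassName D z f

-- === auxiliaries ===
local instance (D : ℕ) : DiscreteTopology (MvPolynomial (Fin D) ℚ) := ⟨rfl⟩

def Close (D : ℕ) (c : ℝ) (P Q : MvPolynomial (Fin D) ℚ) : Prop :=
  ∀ x ∈ unitCube D, |pevalR D P x - pevalR D Q x| ≤ c

lemma close_refl (D : ℕ) {c : ℝ} (hc : 0 ≤ c) (P : MvPolynomial (Fin D) ℚ) :
    Close D c P P := fun x _ => by simpa using hc

open Classical in
noncomputable def nsel (D k : ℕ) (w : ℕ → MvPolynomial (Fin D) ℚ) : ℕ :=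
  Nat.findGreatest (fun n => ∀ i < n, Close D (3 * 2 ^ (-(i:ℤ)-1)) (w (i+1)) (w i)) k

noncomputable def Fmap (D : ℕ) (P : ℕ → MvPolynomial (Fin D) ℚ) (k : ℕ) :
    MvPolynomial (Fin D) ℚ :=
  P (Nat.pair (nsel D k (fun i => P (Nat.pair i k))) k)

lemma jsel_exists (D n m : ℕ) (w : ℕ → MvPolynomial (Fin D) ℚ) :
    ∃ j, j ≤ m ∧ ∀ l, j ≤ l → l ≤ m → Close D ((2:ℝ) ^ (-(n:ℤ)-1)) (w l) (w j) :=
  ⟨m, le_rfl, fun l h1 h2 => by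
    have : l = m := le_antisymm h2 h1
    subst this
    exact close_refl D (by positivity) _⟩

open Classical in
noncomputable def jsel (D n m : ℕ) (w : ℕ → MvPolynomial (Fin D) ℚ) : ℕ :=
  Nat.find (jsel_exists D n m w)

noncomputable def Gmap (D : ℕ) (Q : ℕ → MvPolynomial (Fin D) ℚ) (k : ℕ) :
    MvPolynomial (Fin D) ℚ :=
  Q (jsel D (Nat.unpair k).1 (Nat.unpair k).2 Q)

-- congruence lemmas
lemma findGreatest_congr (p q : ℕ → Prop) [DecidablePred p] [DecidablePred q] (b : ℕ)
    (h : ∀ n, n ≤ b → (p n ↔ q n)) : Nat.findGreatest p b = Nat.findGreatest q b := by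
  induction b with
  | zero => rfl
  | succ b ih =>
    rw [Nat.findGreatest_succ, Nat.findGreatest_succ]
    by_cases hp : p (b+1)
    · rw [if_pos hp, if_pos ((h _ le_rfl).mp hp)]
    · rw [if_neg hp, if_neg (fun hq => hp ((h _ le_rfl).mpr hq)),
        ih (fun n hn => h n (hn.trans (Nat.le_succ b)))]

lemma find_congr' {p q : ℕ → Prop} [DecidablePred p] [DecidablePred q]
    (hp : ∃ n, p n) (hq : ∃ n, q n) (h : ∀ n, p n ↔ q n) : Nat.find hp = Nat.find hq :=
  le_antisymm (Nat.find_min' hp ((h _).mpr (Nat.find_spec hq)))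
    (Nat.find_min' hq ((h _).mp (Nat.find_spec hp)))

-- continuity from finite dependence
lemma continuous_of_finite_dependence {α : Type*} [TopologicalSpace α] [DiscreteTopology α]
    [Nonempty α] (φ : (ℕ → α) → ℕ → α)
    (h : ∀ k, ∃ S : Finset ℕ, ∀ P Q : ℕ → α, (∀ i ∈ S, P i = Q i) → φ P k = φ Q k) :
    Continuous φ := by
  refine continuous_pi fun k => ?_
  obtain ⟨S, hS⟩ := h k
  have : (fun P : ℕ → α => φ P k) =
      (fun w : {i // i ∈ S} → α =>
        φ (fun i => if hi : i ∈ S then w ⟨i, hi⟩ else Classical.arbitrary α) k) ∘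
      (fun P : ℕ → α => fun i : {i // i ∈ S} => P i.1) := by
    funext P
    exact (hS _ _ (fun i hi => by simp [hi])).symm
  rw [this]
  exact continuous_of_discreteTopology.comp (continuous_pi fun i => continuous_apply i.1)

-- extensionality
lemma Fmap_ext (D k : ℕ) (P Q : ℕ → MvPolynomial (Fin D) ℚ)
    (h : ∀ i, i ≤ k → P (Nat.pair i k) = Q (Nat.pair i k)) : Fmap D P k = Fmap D Q k := by
  classical
  have hsel : nsel D k (fun i => P (Nat.pair i k)) = nsel D k (fun i => Q (Nat.pair i k)) := by
    apply findGreatest_congr _ _ k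
    intro n hn
    constructor <;> intro H i hi
    · simpa only [h (i+1) (by omega), h i (by omega)] using H i hi
    · simpa only [← h (i+1) (by omega), ← h i (by omega)] using H i hi
  unfold Fmap
  rw [← hsel]
  exact h _ (Nat.findGreatest_le k)

lemma Gmap_ext (D k : ℕ) (P Q : ℕ → MvPolynomial (Fin D) ℚ)
    (h : ∀ i, i ≤ (Nat.unpair k).2 → P i = Q i) : Gmap D P k = Gmap D Q k := by
  classical
  set n := (Nat.unpair k).1
  set m := (Nat.unpair k).2
  have hsel : jsel D n m P = jsel D n m Q := by
    apply find_congr'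
    intro j
    constructor <;> rintro ⟨hj, H⟩ <;> refine ⟨hj, fun l h1 h2 => ?_⟩
    · rw [← h l h2, ← h j hj]; exact H l h1 h2
    · rw [h l h2, h j hj]; exact H l h1 h2
  unfold Gmap
  rw [← hsel]
  exact h _ ((Nat.find_min' _ ⟨le_rfl, fun l h1 h2 => by
    have : l = m := le_antisymm h2 h1
    subst this
    exact close_refl D (by positivity) _⟩ : jsel D n m P ≤ m))

-- zpow helpers
lemma two_zpow_split (z : ℤ) : (2:ℝ) ^ z = 2 ^ (z-1) + 2 ^ (z-1) := by
  rw [zpow_sub_one₀ (two_ne_zero)]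
  ring

-- nsel / jsel API
open Classical in
lemma nsel_ge (D k J : ℕ) (w : ℕ → MvPolynomial (Fin D) ℚ) (hJ : J ≤ k)
    (h : ∀ i < J, Close D (3 * 2 ^ (-(i:ℤ)-1)) (w (i+1)) (w i)) : J ≤ nsel D k w := by
  unfold nsel
  apply Nat.le_findGreatest hJ h

open Classical in
lemma nsel_spec (D k J : ℕ) (w : ℕ → MvPolynomial (Fin D) ℚ) (hJ : J ≤ k)
    (h : ∀ i < J, Close D (3 * 2 ^ (-(i:ℤ)-1)) (w (i+1)) (w i)) :
    ∀ i < nsel D k w, Close D (3 * 2 ^ (-(i:ℤ)-1)) (w (i+1)) (w i) := by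
  unfold nsel
  exact Nat.findGreatest_spec (P := fun n => ∀ i < n, Close D (3 * 2 ^ (-(i:ℤ)-1)) (w (i+1)) (w i)) hJ h

open Classical in
lemma jsel_spec (D n m : ℕ) (w : ℕ → MvPolynomial (Fin D) ℚ) :
    jsel D n m w ≤ m ∧ ∀ l, jsel D n m w ≤ l → l ≤ m →
      Close D ((2:ℝ) ^ (-(n:ℤ)-1)) (w l) (w (jsel D n m w)) := by
  unfold jsel
  exact Nat.find_spec (jsel_exists D n m w)

open Classical in
lemma jsel_min' (D n m : ℕ) (w : ℕ → MvPolynomial (Fin D) ℚ) {j : ℕ}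
    (hj : j ≤ m ∧ ∀ l, j ≤ l → l ≤ m → Close D ((2:ℝ) ^ (-(n:ℤ)-1)) (w l) (w j)) :
    jsel D n m w ≤ j := by
  unfold jsel
  exact Nat.find_min' _ hj

lemma eventually_const_of_mono_bdd (j : ℕ → ℕ) (mono : ∀ m, j m ≤ j (m+1)) (N : ℕ)
    (bdd : ∀ m, N ≤ m → j m ≤ N) : ∃ m0, ∀ m, m0 ≤ m → j m = j m0 := by
  have hmono : Monotone j := monotone_nat_of_le_succ mono
  by_contra hcon
  push_neg at hcon
  have grow : ∀ t, ∃ m, N ≤ m ∧ j N + t ≤ j m := by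
    intro t
    induction t with
    | zero => exact ⟨N, le_rfl, by omega⟩
    | succ t ih =>
      obtain ⟨m, hm1, hm2⟩ := ih
      obtain ⟨m', hm'1, hm'2⟩ := hcon m
      have h1 : j m ≤ j m' := hmono hm'1
      have h2 : j m < j m' := lt_of_le_of_ne h1 (fun h => hm'2 h.symm)
      exact ⟨m', hm1.trans hm'1, by omega⟩
  obtain ⟨m, hm1, hm2⟩ := grow (N+1)
  have := bdd m hm1
  omega


lemma Fmap_correct (D : ℕ) (f : EuclideanSpace ℝ (Fin D) → ℝ)
    (P : ℕ → MvPolynomial (Fin D) ℚ)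
    (z : ℕ → MvPolynomial (Fin D) ℚ)
    (hstab : ∀ n : ℕ, ∃ M : ℕ, ∀ m : ℕ, M ≤ m → P (Nat.pair n m) = z n)
    (hname : IsWeierstrassName D z f) :
    TendstoUniformlyOn (fun n x => pevalR D (Fmap D P n) x) f Filter.atTop (unitCube D) := by
  classical
  choose M hM using hstab
  rw [Metric.tendstoUniformlyOn_iff]
  intro ε hε
  obtain ⟨J, hJ⟩ : ∃ J : ℕ, (2:ℝ) ^ (-(J:ℤ)) < ε / 4 := by
    obtain ⟨J, hJ⟩ := exists_pow_lt_of_lt_one (show (0:ℝ) < ε/4 by positivity)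
      (show (1/2:ℝ) < 1 by norm_num)
    refine ⟨J, ?_⟩
    rw [zpow_neg, zpow_natCast]
    have : ((2:ℝ)^J)⁻¹ = (1/2:ℝ)^J := by rw [one_div, inv_pow]
    rw [this]; exact hJ
  set N := max J ((Finset.range (J+1)).sup M) with hN
  rw [eventually_atTop]
  refine ⟨N, fun k hk x hx => ?_⟩
  set w := fun i => P (Nat.pair i k) with hw
  have hJk : J ≤ k := le_trans (le_max_left _ _) hk
  have hrow : ∀ i, i ≤ J → w i = z i := fun i hi =>
    hM i k (le_trans (le_trans (Finset.le_sup (Finset.mem_range.mpr (by omega)))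
      (le_max_right _ _)) hk)
  have hpredJ : ∀ i < J, Close D (3 * 2 ^ (-(i:ℤ)-1)) (w (i+1)) (w i) := by
    intro i hi y hy
    rw [hrow (i+1) (by omega), hrow i (by omega)]
    have h1 := hname (i+1) y hy
    have h2 := hname i y hy
    have e1 : (-(↑(i+1):ℤ)) = -(i:ℤ) - 1 := by push_cast; ring
    rw [e1] at h1
    have e2 : (2:ℝ) ^ (-(i:ℤ)) = 2 ^ (-(i:ℤ)-1) + 2 ^ (-(i:ℤ)-1) := two_zpow_split _
    calc |pevalR D (z (i+1)) y - pevalR D (z i) y|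
        = |(f y - pevalR D (z i) y) - (f y - pevalR D (z (i+1)) y)| := by ring_nf
      _ ≤ |f y - pevalR D (z i) y| + |f y - pevalR D (z (i+1)) y| := abs_sub _ _
      _ ≤ 2 ^ (-(i:ℤ)) + 2 ^ (-(i:ℤ)-1) := by linarith
      _ = 3 * 2 ^ (-(i:ℤ)-1) := by rw [e2]; ring
  have hge : J ≤ nsel D k w := nsel_ge D k J w hJk hpredJ
  have hchain := nsel_spec D k J w hJk hpredJ
  set nst := nsel D k w with hnst
  have key : ∀ n, J ≤ n → n ≤ nst →
      |f x - pevalR D (w n) x| ≤ 4 * 2 ^ (-(J:ℤ)) - 3 * 2 ^ (-(n:ℤ)) := by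
    refine Nat.le_induction ?_ ?_
    · intro _
      rw [hrow J le_rfl]
      have := hname J x hx
      have hp : (0:ℝ) < 2 ^ (-(J:ℤ)) := by positivity
      linarith
    · intro n hJn ih hsucc
      have hlt : n < nst := hsucc
      have hcl := hchain n hlt x hx
      have ihh := ih (le_of_lt hlt)
      have e1 : (-(↑(n+1):ℤ)) = -(n:ℤ) - 1 := by push_cast; ring
      have e2 : (2:ℝ) ^ (-(n:ℤ)) = 2 ^ (-(n:ℤ)-1) + 2 ^ (-(n:ℤ)-1) := two_zpow_split _
      rw [e1]
      calc |f x - pevalR D (w (n+1)) x|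
          ≤ |f x - pevalR D (w n) x| + |pevalR D (w (n+1)) x - pevalR D (w n) x| := by
            have : f x - pevalR D (w (n+1)) x =
              (f x - pevalR D (w n) x) - (pevalR D (w (n+1)) x - pevalR D (w n) x) := by ring
            rw [this]
            exact abs_sub _ _
        _ ≤ (4 * 2 ^ (-(J:ℤ)) - 3 * 2 ^ (-(n:ℤ))) + 3 * 2 ^ (-(n:ℤ)-1) := by linarith
        _ = 4 * 2 ^ (-(J:ℤ)) - 3 * 2 ^ (-(n:ℤ)-1) := by rw [e2]; ring
  have hfin := key nst hge le_rfl
  have hFk : Fmap D P k = w nst := rfl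
  rw [Real.dist_eq, hFk]
  have hp : (0:ℝ) < 2 ^ (-(nst:ℤ)) := by positivity
  calc |f x - pevalR D (w nst) x| ≤ 4 * 2 ^ (-(J:ℤ)) - 3 * 2 ^ (-(nst:ℤ)) := hfin
    _ < 4 * (ε/4) := by linarith
    _ = ε := by ring

lemma Gmap_correct (D : ℕ) (f : EuclideanSpace ℝ (Fin D) → ℝ)
    (Q : ℕ → MvPolynomial (Fin D) ℚ)
    (hQ : TendstoUniformlyOn (fun n x => pevalR D (Q n) x) f Filter.atTop (unitCube D)) :
    ∃ z : ℕ → MvPolynomial (Fin D) ℚ,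
      (∀ n : ℕ, ∃ M : ℕ, ∀ m : ℕ, M ≤ m → Gmap D Q (Nat.pair n m) = z n) ∧
      IsWeierstrassName D z f := by
  classical
  rw [Metric.tendstoUniformlyOn_iff] at hQ
  have happ : ∀ ε : ℝ, 0 < ε → ∃ N, ∀ l, N ≤ l → ∀ x ∈ unitCube D,
      |f x - pevalR D (Q l) x| < ε := by
    intro ε hε
    obtain ⟨N, hN⟩ := eventually_atTop.mp (hQ ε hε)
    exact ⟨N, fun l hl x hx => by simpa [Real.dist_eq] using hN l hl x hx⟩
  have main : ∀ n : ℕ, ∃ zn, (∃ M, ∀ m, M ≤ m → Gmap D Q (Nat.pair n m) = zn) ∧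
      ∀ x ∈ unitCube D, |f x - pevalR D zn x| ≤ (2:ℝ) ^ (-(n:ℤ)) := by
    intro n
    set j := fun m => jsel D n m Q with hj
    have mono : ∀ m, j m ≤ j (m+1) := by
      intro m
      by_cases hc : j (m+1) ≤ m
      · apply jsel_min'
        have spec := jsel_spec D n (m+1) Q
        exact ⟨hc, fun l h1 h2 => spec.2 l h1 (h2.trans (Nat.le_succ m))⟩
      · have h1 : j m ≤ m := (jsel_spec D n m Q).1
        omega
    obtain ⟨N, hN⟩ := happ ((2:ℝ) ^ (-(n:ℤ)-2)) (by positivity)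
    have bdd : ∀ m, N ≤ m → j m ≤ N := by
      intro m hm
      apply jsel_min'
      refine ⟨hm, fun l h1 h2 => fun x hx => ?_⟩
      have a := hN l h1 x hx
      have b := hN N le_rfl x hx
      have e2 : (2:ℝ) ^ (-(n:ℤ)-1) = 2 ^ (-(n:ℤ)-1-1) + 2 ^ (-(n:ℤ)-1-1) := two_zpow_split _
      have e3 : (-(n:ℤ)-1-1) = -(n:ℤ)-2 := by ring
      rw [e3] at e2
      calc |pevalR D (Q l) x - pevalR D (Q N) x|
          = |(f x - pevalR D (Q N) x) - (f x - pevalR D (Q l) x)| := by ring_nf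
        _ ≤ |f x - pevalR D (Q N) x| + |f x - pevalR D (Q l) x| := abs_sub _ _
        _ ≤ 2 ^ (-(n:ℤ)-2) + 2 ^ (-(n:ℤ)-2) := by linarith
        _ = 2 ^ (-(n:ℤ)-1) := e2.symm
    obtain ⟨m0, hm0⟩ := eventually_const_of_mono_bdd j mono N bdd
    set jst := j m0 with hjst
    have hclose : ∀ l, jst ≤ l → Close D ((2:ℝ) ^ (-(n:ℤ)-1)) (Q l) (Q jst) := by
      intro l hl
      have hm := hm0 (max l m0) (le_max_right _ _)
      have spec := jsel_spec D n (max l m0) Q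
      rw [show jsel D n (max l m0) Q = jst from hm] at spec
      exact spec.2 l hl (le_max_left _ _)
    refine ⟨Q jst, ⟨m0, fun m hm => ?_⟩, ?_⟩
    · simp only [Gmap, Nat.unpair_pair]
      rw [show jsel D n m Q = jst from hm0 m hm]
    · intro x hx
      obtain ⟨N', hN'⟩ := happ ((2:ℝ) ^ (-(n:ℤ)-1)) (by positivity)
      set l := max jst N' with hl
      have c := hclose l (le_max_left _ _) x hx
      have a := hN' l (le_max_right _ _) x hx
      have e2 : (2:ℝ) ^ (-(n:ℤ)) = 2 ^ (-(n:ℤ)-1) + 2 ^ (-(n:ℤ)-1) := two_zpow_split _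
      calc |f x - pevalR D (Q jst) x|
          = |(f x - pevalR D (Q l) x) + (pevalR D (Q l) x - pevalR D (Q jst) x)| := by ring_nf
        _ ≤ |f x - pevalR D (Q l) x| + |pevalR D (Q l) x - pevalR D (Q jst) x| := abs_add_le _ _
        _ ≤ 2 ^ (-(n:ℤ)-1) + 2 ^ (-(n:ℤ)-1) := by linarith
        _ = 2 ^ (-(n:ℤ)) := e2.symm
  choose z hz1 hz2 using main
  exact ⟨z, hz1, hz2⟩

/-- For `D ≥ 1` and `K = [0,1]^D`, the jump `[ρ→ρ] ∘ ι'` of the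
Weierstraß representation of `C(K)` is continuously equivalent to the naive
Weierstraß representation `[ρ→ρ]'`. -/
theorem stmt6 (D : ℕ) (hD : 1 ≤ D) :
    (∃ F : (ℕ → MvPolynomial (Fin D) ℚ) → (ℕ → MvPolynomial (Fin D) ℚ),
        ContinuousOn F {P | ∃ f : EuclideanSpace ℝ (Fin D) → ℝ,
          ContinuousOn f (unitCube D) ∧ IsWeierstrassJumpName D P f} ∧
        ∀ (f : EuclideanSpace ℝ (Fin D) → ℝ), ContinuousOn f (unitCube D) →
          ∀ P, IsWeierstrassJumpName D P f → IsWeierstrassPrimeName D (F P) f) ∧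
    (∃ G : (ℕ → MvPolynomial (Fin D) ℚ) → (ℕ → MvPolynomial (Fin D) ℚ),
        ContinuousOn G {P | ∃ f : EuclideanSpace ℝ (Fin D) → ℝ,
          ContinuousOn f (unitCube D) ∧ IsWeierstrassPrimeName D P f} ∧
        ∀ (f : EuclideanSpace ℝ (Fin D) → ℝ), ContinuousOn f (unitCube D) →
          ∀ P, IsWeierstrassPrimeName D P f → IsWeierstrassJumpName D (G P) f) := by
  constructor
  · refine ⟨Fmap D, (continuous_of_finite_dependence (Fmap D) ?_).continuousOn, ?_⟩
    · intro k
      refine ⟨(Finset.range (k+1)).image (fun i => Nat.pair i k), fun P Q h => ?_⟩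
      exact Fmap_ext D k P Q fun i hi =>
        h _ (Finset.mem_image_of_mem _ (Finset.mem_range.mpr (by omega)))
    · rintro f _ P ⟨z, hstab, hname⟩
      exact Fmap_correct D f P z hstab hname
  · refine ⟨Gmap D, (continuous_of_finite_dependence (Gmap D) ?_).continuousOn, ?_⟩
    · intro k
      refine ⟨Finset.range ((Nat.unpair k).2 + 1), fun P Q h => ?_⟩
      exact Gmap_ext D k P Q fun i hi => h _ (Finset.mem_range.mpr (by omega))
    · intro f _ Q hQ
      exact Gmap_correct D f Q hQ
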